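/- q-binomial summation identity: for every integer N ≥ 1, every integer K with 0 ≤ K ≤ N − 1, every integer k with 1 ≤ k ≤ N, and every real q ∈ (0,1), Σ_{p=0}^{K} Σ_{r=1}^{N−K} s_{K,p,r}(k) = (−1)^{N−K} q^{(K²+K)/2} [N−1 choose K]_q, where s_{K,p,r}(k) = (−1)^{N−K+p} q^{p(p+1)/2 + (r−k)p + (K²−K)/2 + r(K+r−k)} [k choose p+r]_q [N−k choose N−K−r]_q whenever p + r ≤ k ≤ K + r, and s_{K,p,r}(k) = 0 otherwise. -/

import Mathlib

open scoped BigOperators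

noncomputable section

/-- The q-deformed factorial `[m]_q!`. -/
def qfact (q : ℝ) (m : ℕ) : ℝ := (∏ j ∈ Finset.Icc 1 m, (1 - q ^ j)) / (1 - q) ^ m

/-- The Gaussian binomial coefficient `[n choose k]_q`. -/
def qbinom (q : ℝ) (n k : ℕ) : ℝ :=
  if k ≤ n then qfact q n / (qfact q k * qfact q (n - k)) else 0

/-- The coefficient `s_{K,p,r}(k)`. -/
def sCoef (q : ℝ) (N K p r k : ℕ) : ℝ :=
  if p + r ≤ k ∧ k ≤ K + r then
    (-1 : ℝ) ^ (N - K + p) *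
      q ^ (((p : ℤ) * (p + 1)) / 2 + ((r : ℤ) - (k : ℤ)) * p +
        ((K : ℤ) * K - K) / 2 + (r : ℤ) * ((K : ℤ) + r - k)) *
      qbinom q k (p + r) * qbinom q (N - k) (N - K - r)
  else 0

/-!
For fixed `r`, the sum over `p` telescopes under the q-Pascal rule
`[k, m+1]_q = [k-1, m+1]_q + q^(k-1-m) [k-1, m]_q`, leaving `q^(k-r) [k-1, r-1]_q`.
The remaining sum over `r` is the q-Vandermonde convolution for
`[N-1, N-1-K]_q = [N-1, K]_q`.
-/

open Finset

section

variable {q : ℝ}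

lemma qfact_pos (hq0 : 0 ≤ q) (hq1 : q < 1) (m : ℕ) : 0 < qfact q m :=
  div_pos (prod_pos fun j hj => sub_pos.2 (pow_lt_one₀ hq0 hq1 (by simp at hj; omega)))
    (pow_pos (sub_pos.2 hq1) m)

lemma qfact_zero : qfact q 0 = 1 := by simp [qfact]

lemma qfact_succ (m : ℕ) : qfact q (m + 1) = qfact q m * ((1 - q ^ (m + 1)) / (1 - q)) := by
  rw [qfact, qfact, prod_Icc_succ_top (by omega), div_mul_div_comm, ← pow_succ]

lemma qbinom_eq_zero_of_lt {n k : ℕ} (h : n < k) : qbinom q n k = 0 := if_neg (by omega)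

lemma qbinom_zero_right (hq0 : 0 ≤ q) (hq1 : q < 1) (n : ℕ) : qbinom q n 0 = 1 := by
  rw [qbinom, if_pos n.zero_le, Nat.sub_zero, qfact_zero, one_mul,
    div_self (qfact_pos hq0 hq1 n).ne']

lemma qbinom_self (hq0 : 0 ≤ q) (hq1 : q < 1) (n : ℕ) : qbinom q n n = 1 := by
  rw [qbinom, if_pos le_rfl, Nat.sub_self, qfact_zero, mul_one,
    div_self (qfact_pos hq0 hq1 n).ne']

lemma qbinom_symm {n k : ℕ} (h : k ≤ n) : qbinom q n (n - k) = qbinom q n k := by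
  rw [qbinom, qbinom, if_pos (by omega), if_pos h, Nat.sub_sub_self h, mul_comm]

lemma qbinom_succ_succ (hq0 : 0 ≤ q) (hq1 : q < 1) (n m : ℕ) :
    qbinom q (n + 1) (m + 1) = qbinom q n (m + 1) + q ^ ((n : ℤ) - m) * qbinom q n m := by
  rcases lt_trichotomy n m with h | rfl | h
  · simp [qbinom_eq_zero_of_lt h, qbinom_eq_zero_of_lt (h.trans m.lt_succ_self),
      qbinom_eq_zero_of_lt (Nat.succ_lt_succ h)]
  · simp [qbinom_self hq0 hq1, qbinom_eq_zero_of_lt]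
  obtain ⟨d, rfl⟩ : ∃ d, n = m + 1 + d := ⟨n - (m + 1), by omega⟩
  rw [show ((m + 1 + d : ℕ) : ℤ) - m = (d + 1 : ℕ) by push_cast; ring, zpow_natCast]
  simp only [qbinom, if_pos (by omega : m + 1 ≤ m + 1 + d + 1),
    if_pos (by omega : m + 1 ≤ m + 1 + d), if_pos (by omega : m ≤ m + 1 + d),
    show m + 1 + d + 1 - (m + 1) = d + 1 by omega, show m + 1 + d - (m + 1) = d by omega, show m + 1 + d - m = d + 1 by omega]
  rw [qfact_succ (m + 1 + d), qfact_succ m, qfact_succ d]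
  have hfm := (qfact_pos hq0 hq1 m).ne'
  have hfd := (qfact_pos hq0 hq1 d).ne'
  have hfn := (qfact_pos hq0 hq1 (m + 1 + d)).ne'
  have hm := (sub_pos.2 (pow_lt_one₀ hq0 hq1 m.succ_ne_zero)).ne'
  have hd := (sub_pos.2 (pow_lt_one₀ hq0 hq1 d.succ_ne_zero)).ne'
  have h1q : (1 : ℝ) - q ≠ 0 := (sub_pos.2 hq1).ne'
  field_simp
  ring

theorem qbinom_add_eq (hq0 : 0 < q) (hq1 : q < 1) (m n h : ℕ) :
    qbinom q (m + n) h =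
      ∑ ij ∈ antidiagonal h, q ^ ((ij.1 : ℤ) * (n - ij.2)) * qbinom q m ij.1 * qbinom q n ij.2 := by
  induction m generalizing h with
  | zero =>
    rw [sum_eq_single_of_mem (0, h) (by simp)]
    · simp [qbinom_zero_right hq0.le hq1]
    · rintro ⟨i, j⟩ hij hne
      have hi : 0 < i := by rw [HasAntidiagonal.mem_antidiagonal] at hij; grind
      simp [qbinom_eq_zero_of_lt hi]
  | succ m ih =>
    cases h with
    | zero => simp [qbinom_zero_right hq0.le hq1]
    | succ h =>
      rw [show m + 1 + n = m + n + 1 by omega, qbinom_succ_succ hq0.le hq1, ih, ih,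
        Nat.sum_antidiagonal_succ, Nat.sum_antidiagonal_succ, mul_sum, add_assoc,
        ← sum_add_distrib]
      congr 1
      · simp [qbinom_zero_right hq0.le hq1]
      refine sum_congr rfl fun ⟨i, j⟩ hij => ?_
      obtain rfl : h = i + j := (HasAntidiagonal.mem_antidiagonal.1 hij).symm
      have hexp : q ^ (((m + n : ℕ) : ℤ) - (i + j : ℕ)) * q ^ ((i : ℤ) * (n - j))
          = q ^ (((i + 1 : ℕ) : ℤ) * (n - j)) * q ^ ((m : ℤ) - i) := by
        rw [← zpow_add₀ hq0.ne', ← zpow_add₀ hq0.ne']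
        push_cast
        ring_nf
      rw [qbinom_succ_succ hq0.le hq1]
      linear_combination (qbinom q m i * qbinom q n j) * hexp

theorem sum_range_alternating_qbinom (hq0 : 0 < q) (hq1 : q < 1) (k r M : ℕ) :
    ∑ p ∈ range (M + 1),
        (-1) ^ p * q ^ ((p : ℤ) * (p + 1) / 2 + ((r : ℤ) - k) * p) * qbinom q (k + 1) (p + r + 1)
      = (-1) ^ M * q ^ ((M : ℤ) * (M + 1) / 2 + ((r : ℤ) - k) * M) * qbinom q k (M + r + 1)
        + q ^ ((k : ℤ) - r) * qbinom q k r := by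
  induction M with
  | zero => simp [qbinom_succ_succ hq0.le hq1]
  | succ M ih =>
    have hexp : q ^ (((M + 1 : ℕ) : ℤ) * ((M + 1 : ℕ) + 1) / 2 + ((r : ℤ) - k) * (M + 1 : ℕ))
          * q ^ ((k : ℤ) - (M + r + 1 : ℕ))
        = q ^ ((M : ℤ) * (M + 1) / 2 + ((r : ℤ) - k) * M) := by
      rw [← zpow_add₀ hq0.ne']
      push_cast
      congr 1
      ring_nf
      omega
    rw [sum_range_succ, ih, show M + 1 + r + 1 = M + r + 1 + 1 by omega,
      qbinom_succ_succ hq0.le hq1]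
    linear_combination ((-1 : ℝ) ^ (M + 1) * qbinom q k (M + r + 1)) * hexp

lemma sCoef_eq_zero {q : ℝ} {N K p r k : ℕ} (h : ¬(p + r ≤ k ∧ k ≤ K + r)) :
    sCoef q N K p r k = 0 :=
  if_neg h

theorem sum_range_sCoef (hq0 : 0 < q) (hq1 : q < 1) {N K k r : ℕ} (hk : 1 ≤ k) (hr : 1 ≤ r)
    (hkN : k ≤ N) :
    ∑ p ∈ range (K + 1), sCoef q N K p r k
      = (-1) ^ (N - K) * q ^ (((K : ℤ) * K - K) / 2 + r * ((K : ℤ) + r - k) + (k - r))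
          * qbinom q (k - 1) (r - 1) * qbinom q (N - k) (N - K - r) := by
  by_cases hkK : K + r < k
  · rw [sum_eq_zero fun p _ => sCoef_eq_zero (by omega),
      qbinom_eq_zero_of_lt (by omega : N - k < N - K - r)]
    ring
  by_cases hrk : k < r
  · rw [sum_eq_zero fun p _ => sCoef_eq_zero (by omega),
      qbinom_eq_zero_of_lt (by omega : k - 1 < r - 1)]
    ring
  obtain ⟨k, rfl⟩ : ∃ k', k = k' + 1 := ⟨k - 1, by omega⟩
  obtain ⟨r, rfl⟩ : ∃ r', r = r' + 1 := ⟨r - 1, by omega⟩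
  set C : ℤ := ((K : ℤ) * K - K) / 2 + (r + 1 : ℕ) * ((K : ℤ) + (r + 1 : ℕ) - (k + 1 : ℕ))
  have hsupp : ∀ p ∈ range (K + 1), p ∉ range (k - r + 1) → sCoef q N K p (r + 1) (k + 1) = 0 :=
    fun p _ hp => sCoef_eq_zero (by simp at hp; omega)
  have hterm : ∀ p ∈ range (k - r + 1), sCoef q N K p (r + 1) (k + 1)
      = (-1) ^ (N - K) * q ^ C * qbinom q (N - (k + 1)) (N - K - (r + 1))
        * ((-1) ^ p * q ^ ((p : ℤ) * (p + 1) / 2 + ((r : ℤ) - k) * p)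
          * qbinom q (k + 1) (p + r + 1)) := by
    intro p hp
    rw [mem_range] at hp
    have hexp : (p : ℤ) * (p + 1) / 2 + (((r + 1 : ℕ) : ℤ) - (k + 1 : ℕ)) * p
        + ((K : ℤ) * K - K) / 2 + (r + 1 : ℕ) * ((K : ℤ) + (r + 1 : ℕ) - (k + 1 : ℕ))
        = C + ((p : ℤ) * (p + 1) / 2 + ((r : ℤ) - k) * p) := by
      simp only [C]
      push_cast
      ring
    rw [sCoef, if_pos (by omega), hexp, zpow_add₀ hq0.ne', pow_add, ← add_assoc]
    ring
  -- after telescoping, the boundary term is `[k, k + 1]_q = 0`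
  rw [← sum_subset (range_subset_range.2 (by omega)) hsupp, sum_congr rfl hterm, ← mul_sum,
    sum_range_alternating_qbinom hq0 hq1, show k - r + r + 1 = k + 1 by omega,
    qbinom_eq_zero_of_lt k.lt_succ_self, Nat.add_sub_cancel, Nat.add_sub_cancel,
    zpow_add₀ hq0.ne' C,
    show ((k + 1 : ℕ) : ℤ) - (r + 1 : ℕ) = (k : ℤ) - r by push_cast; ring]
  ring

end

theorem qbinomial_summation_identity_general
    (q : ℝ) (hq0 : 0 < q) (hq1 : q < 1)
    (N K k : ℕ) (hK : K ≤ N - 1) (hk1 : 1 ≤ k) (hkN : k ≤ N) :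
    (∑ p ∈ Finset.range (K + 1), ∑ r ∈ Finset.Icc 1 (N - K), sCoef q N K p r k)
    = (-1 : ℝ) ^ (N - K) * q ^ ((K ^ 2 + K) / 2) * qbinom q (N - 1) K := by
  rw [sum_comm, sum_congr rfl fun r hr => sum_range_sCoef hq0 hq1 hk1 (mem_Icc.1 hr).1 hkN,
    ← qbinom_symm hK, show N - 1 = k - 1 + (N - k) by omega, qbinom_add_eq hq0 hq1, mul_sum]
  have hexp : ∀ r ∈ Icc 1 (N - K), ((K : ℤ) * K - K) / 2 + r * ((K : ℤ) + r - k) + (k - r)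
      = (((K ^ 2 + K) / 2 : ℕ) : ℤ) + ((r - 1 : ℕ) : ℤ) * ((N - k : ℕ) - (N - K - r : ℕ)) := by
    intro r hr
    rw [mem_Icc] at hr
    rw [Nat.cast_sub (by omega), Nat.cast_sub hkN, Nat.cast_sub hr.2, Nat.cast_sub (by omega)]
    push_cast
    ring_nf
    omega
  refine sum_nbij' (fun r => (r - 1, N - K - r)) (fun ij => ij.1 + 1) ?_ ?_ ?_ ?_ fun r hr => ?_
  iterate 4
    simp only [mem_Icc, HasAntidiagonal.mem_antidiagonal, Prod.forall, Prod.mk.injEq]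
    intros
    omega
  rw [hexp r hr, zpow_add₀ hq0.ne', zpow_natCast]
  ring

/-- **Lemma (q-binomial summation identity).**
`Σ_{p=0}^{K} Σ_{r=1}^{N−K} s_{K,p,r}(k) = (−1)^{N−K} q^{(K²+K)/2} [N−1 choose K]_q`. -/
theorem qbinomial_summation_identity
    (q : ℝ) (hq0 : 0 < q) (hq1 : q < 1)
    (N K k : ℕ) (hN : 1 ≤ N) (hK : K ≤ N - 1) (hk1 : 1 ≤ k) (hkN : k ≤ N) :
    (∑ p ∈ Finset.range (K + 1), ∑ r ∈ Finset.Icc 1 (N - K), sCoef q N K p r k)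
    = (-1 : ℝ) ^ (N - K) * q ^ ((K ^ 2 + K) / 2) * qbinom q (N - 1) K :=
  qbinomial_summation_identity_general q hq0 hq1 N K k hK hk1 hkN
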